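/- Let 0 < w < π and let n be a nonnegative integer. Define the deformed quadrupole moment Q(w) = (2n + 1 + 1/(2 cos(w/2))) · g(w), where g(w) = −(2 cos²(w) + 1)/sin²(w) + 3 cos(w)/(w sin(w)). Then Q(w) < 0 for all w ∈ (0, π), and Q is a strictly decreasing function of w on (0, π). -/

import Mathlib

open Real

section auxQuadrupole

-- k(w) = w cos w - sin w < 0 on (0, π]
private lemma quad_k_neg {w : ℝ} (hw : 0 < w) (hw2 : w ≤ π) : w * cos w - sin w < 0 := by
  have hd : ∀ x : ℝ, HasDerivAt (fun x => x * cos x - sin x) (-(x * sin x)) x := by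
    intro x
    have := ((hasDerivAt_id x).mul (Real.hasDerivAt_cos x)).sub (Real.hasDerivAt_sin x)
    refine this.congr_deriv ?_
    simp [id]
  have hanti : StrictAntiOn (fun x : ℝ => x * cos x - sin x) (Set.Icc 0 π) := by
    apply strictAntiOn_of_deriv_neg (convex_Icc 0 π)
      (fun x _ => (hd x).continuousAt.continuousWithinAt)
    intro x hx
    rw [interior_Icc] at hx
    obtain ⟨hx1, hx2⟩ := hx
    rw [(hd x).deriv]
    have hs := Real.sin_pos_of_pos_of_lt_pi hx1 hx2
    nlinarith [mul_pos hx1 hs]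
  have := hanti (Set.left_mem_Icc.2 Real.pi_pos.le) (Set.mem_Icc.2 ⟨hw.le, hw2⟩) hw
  simpa using this

-- N(w) = 3 sin w cos w - 3 w + 2 w sin²w < 0 on (0, π)
private lemma quad_N_neg {w : ℝ} (hw : 0 < w) (hw2 : w < π) :
    3 * (sin w * cos w) - 3 * w + 2 * (w * sin w ^ 2) < 0 := by
  have hd : ∀ x : ℝ, HasDerivAt (fun x => 3 * (sin x * cos x) - 3 * x + 2 * (x * sin x ^ 2))
      (4 * sin x * (x * cos x - sin x)) x := by
    intro x
    have h1 := ((Real.hasDerivAt_sin x).mul (Real.hasDerivAt_cos x)).const_mul 3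
    have h2 := ((hasDerivAt_id x).mul ((Real.hasDerivAt_sin x).pow 2)).const_mul 2
    have h3 := (hasDerivAt_id x).const_mul (3:ℝ)
    have := (h1.sub h3).add h2
    refine this.congr_deriv ?_
    have hsc := Real.sin_sq_add_cos_sq x
    simp [id]
    linear_combination (3 : ℝ) * hsc
  have hanti : StrictAntiOn (fun x : ℝ => 3 * (sin x * cos x) - 3 * x + 2 * (x * sin x ^ 2))
      (Set.Icc 0 π) := by
    apply strictAntiOn_of_deriv_neg (convex_Icc 0 π)
      (fun x _ => (hd x).continuousAt.continuousWithinAt)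
    intro x hx
    rw [interior_Icc] at hx
    obtain ⟨hx1, hx2⟩ := hx
    rw [(hd x).deriv]
    have hs := Real.sin_pos_of_pos_of_lt_pi hx1 hx2
    have hk := quad_k_neg hx1 hx2.le
    nlinarith
  have := hanti (Set.left_mem_Icc.2 Real.pi_pos.le) (Set.mem_Icc.2 ⟨hw.le, hw2.le⟩) hw
  simpa using this

-- helper for Taylor-type bounds
private lemma quad_nonneg_of_deriv_nonneg {f f' : ℝ → ℝ} (hd : ∀ x, HasDerivAt f (f' x) x)
    (h0 : f 0 = 0) (hp : ∀ x, 0 < x → 0 ≤ f' x) : ∀ x, 0 ≤ x → 0 ≤ f x := by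
  intro x hx
  have hmono : MonotoneOn f (Set.Ici (0:ℝ)) := by
    apply monotoneOn_of_deriv_nonneg (convex_Ici 0)
      (fun y _ => (hd y).continuousAt.continuousWithinAt)
      (fun y _ => ((hd y).differentiableAt).differentiableWithinAt)
    intro y hy
    rw [(hd y).deriv]
    exact hp y (by simpa using hy)
  have := hmono (Set.self_mem_Ici) (by exact hx) hx
  linarith [h0 ▸ this]

private lemma quad_sin_ge_cubic {x : ℝ} (hx : 0 ≤ x) : x - x^3/6 ≤ sin x := by
  have := quad_nonneg_of_deriv_nonneg (f := fun x => sin x - (x - x^3/6))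
    (f' := fun x => cos x - (1 - x^2/2))
    (fun x => by
      have h1 : HasDerivAt (fun x : ℝ => x - x^3/6) (1 - x^2/2) x := by
        have := (hasDerivAt_id x).sub ((hasDerivAt_pow 3 x).div_const 6)
        refine this.congr_deriv ?_; push_cast; ring
      exact (Real.hasDerivAt_sin x).sub h1)
    (by simp) (fun y hy => by nlinarith [Real.one_sub_sq_div_two_le_cos (x := y)]) x hx
  linarith

private lemma quad_cos_le_quartic {x : ℝ} (hx : 0 ≤ x) : cos x ≤ 1 - x^2/2 + x^4/24 := by
  have := quad_nonneg_of_deriv_nonneg (f := fun x => (1 - x^2/2 + x^4/24) - cos x)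
    (f' := fun x => (-x + x^3/6) + sin x)
    (fun x => by
      have h1 : HasDerivAt (fun x : ℝ => 1 - x^2/2 + x^4/24) (-x + x^3/6) x := by
        have := (((hasDerivAt_pow 2 x).div_const 2).const_sub 1).add
          ((hasDerivAt_pow 4 x).div_const 24)
        refine this.congr_deriv ?_; push_cast; ring
      exact (h1.sub (Real.hasDerivAt_cos x)).congr_deriv (sub_neg_eq_add _ _))
    (by simp) (fun y hy => by nlinarith [quad_sin_ge_cubic hy.le]) x hx
  linarith

-- G(w) = w sin w + sin²w cos w - 2 w² cos w > 0 on (0, π)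
private lemma quad_G_pos {w : ℝ} (hw : 0 < w) (hw2 : w < π) :
    0 < w * sin w + sin w ^ 2 * cos w - 2 * w ^ 2 * cos w := by
  have hs := Real.sin_pos_of_pos_of_lt_pi hw hw2
  have hsltw := Real.sin_lt hw
  rcases le_or_gt (cos w) 0 with hc | hc
  · have h1 : sin w ^ 2 - 2 * w ^ 2 < 0 := by nlinarith
    nlinarith [mul_pos hw hs, mul_nonneg (neg_nonneg.2 hc) (neg_nonneg.2 h1.le)]
  · have hwlt : w < π / 2 := by
      by_contra hcon
      push_neg at hcon
      have := Real.cos_nonpos_of_pi_div_two_le_of_le hcon (by linarith [Real.pi_pos])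
      linarith
    have hwle : w < 1.58 := by
      have := Real.pi_lt_d2
      linarith
    have hslb := quad_sin_ge_cubic hw.le
    have hcub := quad_cos_le_quartic hw.le
    have hslbpos : 0 < w - w^3/6 := by nlinarith
    have hA : sin w ^ 2 - 2 * w ^ 2 < 0 := by nlinarith
    have hstep : w * sin w + sin w ^ 2 * cos w - 2 * w ^ 2 * cos w
        ≥ w * (w - w^3/6) + (1 - w^2/2 + w^4/24) * ((w - w^3/6)^2 - 2*w^2) := by
      have h1 : cos w * (sin w ^ 2 - 2 * w ^ 2)
          ≥ (1 - w^2/2 + w^4/24) * (sin w ^ 2 - 2 * w ^ 2) :=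
        mul_le_mul_of_nonpos_right hcub hA.le
      have h2 : (1 - w^2/2 + w^4/24) * (sin w ^ 2 - 2*w^2)
          ≥ (1 - w^2/2 + w^4/24) * ((w - w^3/6)^2 - 2*w^2) := by
        have hC : 0 < 1 - w^2/2 + w^4/24 := by nlinarith
        have : (w - w^3/6)^2 ≤ sin w ^ 2 := by nlinarith
        nlinarith
      have h3 : w * (w - w^3/6) ≤ w * sin w := by nlinarith
      nlinarith
    have hP : 0 < w * (w - w^3/6) + (1 - w^2/2 + w^4/24) * ((w - w^3/6)^2 - 2*w^2) := by
      have key : w * (w - w^3/6) + (1 - w^2/2 + w^4/24) * ((w - w^3/6)^2 - 2*w^2)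
          = w^6 * (132 - 24*w^2 + w^4) / 864 := by ring
      have hq : 0 < 132 - 24*w^2 + w^4 := by nlinarith [sq_nonneg (w^2)]
      rw [key]; positivity
    linarith

end auxQuadrupole

/-- The deformed angular matrix element of the quadrupole operator for `q = e^{iw} ∈ S¹`. -/
noncomputable def angularFactorComplexQ (w : ℝ) : ℝ :=
  -(2 * Real.cos w ^ 2 + 1) / Real.sin w ^ 2 + 3 * Real.cos w / (w * Real.sin w)

/-- Quadrupole moment in the state `|n 0 0⟩_q` for `q = e^{iw}`. -/
noncomputable def Qcomplex (n : ℕ) (w : ℝ) : ℝ :=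
  (2 * (n : ℝ) + 1 + 1 / (2 * Real.cos (w/2))) * angularFactorComplexQ w

private lemma quad_angular_eq {w : ℝ} (hw : w ≠ 0) (hs : sin w ≠ 0) :
    angularFactorComplexQ w
      = (3 * (sin w * cos w) - 3 * w + 2 * (w * sin w ^ 2)) / (w * sin w ^ 2) := by
  have hsc := Real.sin_sq_add_cos_sq w
  unfold angularFactorComplexQ
  field_simp
  ring_nf
  linear_combination (-2 * w : ℝ) * hsc

private lemma quad_angular_hasDeriv {w : ℝ} (hw : w ≠ 0) (hs : sin w ≠ 0) :
    HasDerivAt angularFactorComplexQ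
      (-3 * (w * sin w + sin w ^ 2 * cos w - 2 * w ^ 2 * cos w) / (w ^ 2 * sin w ^ 3)) w := by
  have hsc := Real.sin_sq_add_cos_sq w
  have hs2 : sin w ^ 2 ≠ 0 := pow_ne_zero _ hs
  have hws : w * sin w ≠ 0 := mul_ne_zero hw hs
  have hu1 : HasDerivAt (fun w : ℝ => -(2 * cos w ^ 2 + 1))
      (-(2 * (2 * cos w ^ 1 * (-sin w)))) w :=
    ((((Real.hasDerivAt_cos w).pow 2).const_mul 2).add_const 1).neg
  have hv1 : HasDerivAt (fun w : ℝ => sin w ^ 2) (2 * sin w ^ 1 * cos w) w :=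
    (Real.hasDerivAt_sin w).pow 2
  have t1 := hu1.div hv1 hs2
  have hu2 : HasDerivAt (fun w : ℝ => 3 * cos w) (3 * (-sin w)) w :=
    (Real.hasDerivAt_cos w).const_mul 3
  have hv2 : HasDerivAt (fun w : ℝ => w * sin w) (1 * sin w + w * cos w) w :=
    HasDerivAt.mul (hasDerivAt_id' w) (Real.hasDerivAt_sin w)
  have t2 := hu2.div hv2 hws
  have := t1.add t2
  refine this.congr_deriv ?_
  field_simp
  ring_nf
  linear_combination (4*w^2*cos w - 3*w*sin w : ℝ) * hsc

private lemma quad_angular_neg {w : ℝ} (hw : w ∈ Set.Ioo 0 π) :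
    angularFactorComplexQ w < 0 := by
  have hs := Real.sin_pos_of_pos_of_lt_pi hw.1 hw.2
  rw [quad_angular_eq hw.1.ne' hs.ne']
  exact div_neg_of_neg_of_pos (quad_N_neg hw.1 hw.2) (mul_pos hw.1 (pow_pos hs 2))

private lemma quad_angular_anti : StrictAntiOn angularFactorComplexQ (Set.Ioo 0 π) := by
  apply strictAntiOn_of_deriv_neg (convex_Ioo 0 π)
  · intro x hx
    have hs := Real.sin_pos_of_pos_of_lt_pi hx.1 hx.2
    exact (quad_angular_hasDeriv hx.1.ne' hs.ne').continuousAt.continuousWithinAt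
  · intro x hx
    rw [isOpen_Ioo.interior_eq] at hx
    have hs := Real.sin_pos_of_pos_of_lt_pi hx.1 hx.2
    rw [(quad_angular_hasDeriv hx.1.ne' hs.ne').deriv]
    apply div_neg_of_neg_of_pos
    · linarith [quad_G_pos hx.1 hx.2]
    · exact mul_pos (pow_pos hx.1 2) (pow_pos hs 3)

theorem quadrupole_moment_complex_q (n : ℕ) :
    (∀ w : ℝ, w ∈ Set.Ioo 0 Real.pi → Qcomplex n w < 0) ∧
    StrictAntiOn (Qcomplex n) (Set.Ioo 0 Real.pi) := by
  have hcos : ∀ w : ℝ, w ∈ Set.Ioo 0 π → 0 < cos (w/2) := by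
    intro w hw
    apply Real.cos_pos_of_mem_Ioo
    constructor <;> [linarith [hw.1, Real.pi_pos]; linarith [hw.2]]
  have hR : ∀ w : ℝ, w ∈ Set.Ioo 0 π → 0 < 2 * (n : ℝ) + 1 + 1 / (2 * cos (w/2)) := by
    intro w hw
    have h1 := hcos w hw
    have h2 : 0 < 1 / (2 * cos (w/2)) := by positivity
    have : (0:ℝ) ≤ (n:ℝ) := Nat.cast_nonneg n
    linarith
  constructor
  · intro w hw
    exact mul_neg_of_pos_of_neg (hR w hw) (quad_angular_neg hw)
  · intro a ha b hb hab
    have hRa := hR a ha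
    have hRb := hR b hb
    have hga := quad_angular_neg ha
    have hgab := quad_angular_anti ha hb hab
    have hRab : 2 * (n : ℝ) + 1 + 1 / (2 * cos (a/2))
        < 2 * (n : ℝ) + 1 + 1 / (2 * cos (b/2)) := by
      have hcb := hcos b hb
      have hca := hcos a ha
      have hcc : cos (b/2) < cos (a/2) := by
        apply Real.cos_lt_cos_of_nonneg_of_le_pi (by linarith [ha.1])
          (by linarith [hb.2, Real.pi_pos]) (by linarith)
      have := one_div_lt_one_div_of_lt (by linarith : (0:ℝ) < 2 * cos (b/2))
        (by linarith : 2 * cos (b/2) < 2 * cos (a/2))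
      linarith
    unfold Qcomplex
    have h1 : (2 * (n : ℝ) + 1 + 1 / (2 * cos (b/2))) * angularFactorComplexQ b
        < (2 * (n : ℝ) + 1 + 1 / (2 * cos (b/2))) * angularFactorComplexQ a :=
      mul_lt_mul_of_pos_left hgab hRb
    have h2 : (2 * (n : ℝ) + 1 + 1 / (2 * cos (b/2))) * angularFactorComplexQ a
        < (2 * (n : ℝ) + 1 + 1 / (2 * cos (a/2))) * angularFactorComplexQ a :=
      mul_lt_mul_of_neg_right hRab hga
    linarith
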